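/- Let G and H be groups and τ : G → H a half-isomorphism. Then the inverse bijection τ⁻¹ : H → G is also a half-isomorphism. -/

import Mathlib

/-!
A half-homomorphism `τ` sends commuting elements to commuting elements: if `a * b = b * a`,
comparing the possible values of `τ (a * b * b)` and of `τ ((a * b) * (a * b))` forces
`τ a * τ b = τ b * τ a`. For the inverse, suppose `τ (a * b) = τ b * τ a`. Either
`τ (b * a) = τ a * τ b`, so `τ⁻¹ (τ a * τ b) = b * a`, or `τ (b * a) = τ (a * b)`; then `a` and `b`
commute by injectivity, hence so do `τ a` and `τ b`, and `τ⁻¹ (τ a * τ b) = a * b`.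
-/

def IsHalfHom {G H : Type*} [Mul G] [Mul H] (τ : G → H) : Prop :=
  ∀ x y : G, τ (x * y) = τ x * τ y ∨ τ (x * y) = τ y * τ x

namespace IsHalfHom

theorem map_mul_self {G H : Type*} [Mul G] [Mul H] {τ : G → H} (hτ : IsHalfHom τ) (g : G) :
    τ (g * g) = τ g * τ g :=
  (hτ g g).elim id id

variable {G H : Type*} [Group G] [Group H] {τ : G → H}

theorem commute_of_map_mul (hτ : IsHalfHom τ) {a b : G} (hab : Commute a b)
    (h : τ (a * b) = τ a * τ b) : Commute (τ a) (τ b) := by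
  have h_abb : τ (a * (b * b)) = τ a * (τ b * τ b) ∨ Commute (τ a) (τ b) := by
    rcases hτ (a * b) b with h1 | h1
    · left
      rw [← mul_assoc, h1, h, mul_assoc]
    rcases hτ (b * b) a with h2 | h2
    · right
      have : τ b * (τ a * τ b) = τ b * (τ b * τ a) :=
        calc τ b * (τ a * τ b) = τ (a * b * b) := by rw [h1, h]
          _ = τ (b * b * a) := by rw [mul_assoc, (hab.mul_right hab).eq]
          _ = τ b * (τ b * τ a) := by rw [h2, map_mul_self hτ, mul_assoc]
      exact mul_left_cancel this
    · left
      rwa [(hab.mul_right hab).eq, ← map_mul_self hτ b]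
  rcases h_abb with h_abb | h_comm
  · have h_sq : τ a * τ b * (τ a * τ b) = τ (a * (a * (b * b))) := by
      rw [← h, ← map_mul_self hτ, mul_assoc, ← mul_assoc b, ← hab.eq, mul_assoc]
    rcases hτ a (a * (b * b)) with h3 | h3 <;> rw [h3, h_abb] at h_sq
    · have : τ b * τ a * τ b = τ a * τ b * τ b :=
        mul_left_cancel (a := τ a) (by simpa only [mul_assoc] using h_sq)
      exact (mul_right_cancel this).symm
    · exact mul_left_cancel (a := τ a * τ b) (by simpa only [mul_assoc] using h_sq)
  · exact h_comm

theorem map_commute (hτ : IsHalfHom τ) {a b : G} (hab : Commute a b) : Commute (τ a) (τ b) := by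
  rcases hτ a b with h | h
  · exact hτ.commute_of_map_mul hab h
  · exact (hτ.commute_of_map_mul hab.symm (hab.eq ▸ h)).symm

end IsHalfHom

/-- The inverse of a half-isomorphism of groups is a half-isomorphism. -/
theorem half_isomorphism_inverse {G H : Type*} [Group G] [Group H] (τ : G ≃ H)
    (hhalf : ∀ x y : G, τ (x * y) = τ x * τ y ∨ τ (x * y) = τ y * τ x) :
    ∀ x y : H, τ.symm (x * y) = τ.symm x * τ.symm y ∨
      τ.symm (x * y) = τ.symm y * τ.symm x := by
  have hτ : IsHalfHom τ := hhalf
  intro x y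
  obtain ⟨a, rfl⟩ := τ.surjective x
  obtain ⟨b, rfl⟩ := τ.surjective y
  simp only [Equiv.symm_apply_apply, Equiv.symm_apply_eq]
  rcases hτ a b with hab | hab
  · exact .inl hab.symm
  rcases hτ b a with hba | hba
  · have h_comm : Commute a b := τ.injective (hab.trans hba.symm)
    exact .inl (hab.trans (hτ.map_commute h_comm).eq.symm).symm
  · exact .inr hba.symm
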